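/- arXiv:1107.2054 — 3 statements merged into one kernel-verified Lean document; each statement's English description precedes it below -/
import Mathlib

section
/- Each component of the Lamb–Oseen vortex satisfies the heat equation away from the origin: for every t > 0 and every x ∈ ℝ² with x ≠ 0, ∂ₜΘ(t,x) = ΔΘ(t,x), where Δ is the Laplacian acting componentwise in the space variable x. -/
open Real MeasureTheory Filter
open scoped Topology ENNReal NNReal

noncomputable section

/-- The perpendicular vector `x⊥ = (x₂, -x₁)`. -/
def perp (x : EuclideanSpace ℝ (Fin 2)) : EuclideanSpace ℝ (Fin 2) :=
  (WithLp.equiv 2 (Fin 2 → ℝ)).symm ![x 1, -(x 0)]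

/-- The Lamb–Oseen vortex `Θ(t,x) = x⊥/(2π|x|²) · (1 - exp(-|x|²/(4t)))`, with value `0`
at `x = 0` (automatic here, since in Lean `0/0 = 0` and `perp 0 = 0`). -/
def lambOseen (t : ℝ) (x : EuclideanSpace ℝ (Fin 2)) : EuclideanSpace ℝ (Fin 2) :=
  ((1 - Real.exp (-‖x‖ ^ 2 / (4 * t))) / (2 * π * ‖x‖ ^ 2)) • perp x

/-- The partial derivative `∂ᵢ f (x)` of a scalar function on `ℝ²`. -/
def pd (i : Fin 2) (f : EuclideanSpace ℝ (Fin 2) → ℝ) (x : EuclideanSpace ℝ (Fin 2)) : ℝ :=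
  fderiv ℝ f x (EuclideanSpace.single i 1)

/-!
Each component of `Θ(t, ·)` has the form `g(‖x‖²) · ℓ(x)` with `ℓ` linear and
`g = A(t, ·)`, `A(t, r) = (1 - exp(-r/(4t)))/(2πr)`. On `ℝⁿ`, differentiating twice and summing
over an orthonormal basis gives `Δ(g(‖x‖²) ℓ(x)) = (4 r g''(r) + 2(n + 2) g'(r)) ℓ(x)` at
`r = ‖x‖²`, so for `n = 2` the heat equation reduces to the one-variable identity
`∂ₜA = 4 r ∂ᵣ²A + 8 ∂ᵣA`, which is checked on closed forms of the radial derivatives.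
-/

open scoped RealInnerProductSpace

section RadialTimesLinear

variable {E : Type*} [NormedAddCommGroup E] [InnerProductSpace ℝ E]
  {g g' : ℝ → ℝ} {g'' : ℝ} (c : E →L[ℝ] ℝ)

theorem fderiv_comp_normSq_mul_apply {y : E} {d : ℝ} (hg : HasDerivAt g d (‖y‖ ^ 2)) (v : E) :
    fderiv ℝ (fun z => g (‖z‖ ^ 2) * c z) y v = g (‖y‖ ^ 2) * c v + 2 * d * ⟪y, v⟫ * c y := by
  have h : HasFDerivAt (fun z => g (‖z‖ ^ 2) * c z) _ y :=
    (hg.comp_hasFDerivAt y (hasStrictFDerivAt_norm_sq y).hasFDerivAt).mul c.hasFDerivAt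
  rw [h.fderiv]
  simp only [add_apply, smul_apply, innerSL_apply_apply, smul_eq_mul, nsmul_eq_mul,
    Function.comp_apply]
  push_cast
  ring

theorem fderiv_fderiv_comp_normSq_mul_apply {x : E}
    (hg : ∀ᶠ y in 𝓝 x, HasDerivAt g (g' (‖y‖ ^ 2)) (‖y‖ ^ 2))
    (hg' : HasDerivAt g' g'' (‖x‖ ^ 2)) (v : E) :
    fderiv ℝ (fun y => fderiv ℝ (fun z => g (‖z‖ ^ 2) * c z) y v) x v
      = 4 * g'' * ⟪x, v⟫ ^ 2 * c x + 2 * g' (‖x‖ ^ 2) * (‖v‖ ^ 2 * c x + 2 * ⟪x, v⟫ * c v) := by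
  have hnormSq : HasFDerivAt (fun z : E => ‖z‖ ^ 2) (2 • innerSL ℝ x) x :=
    (hasStrictFDerivAt_norm_sq x).hasFDerivAt
  have hinner : HasFDerivAt (fun y : E => ⟪y, v⟫) (innerSL ℝ v) x := by
    convert (innerSL ℝ v).hasFDerivAt using 1
    ext y
    simp [real_inner_comm]
  have hfirst : (fun y => fderiv ℝ (fun z => g (‖z‖ ^ 2) * c z) y v)
      =ᶠ[𝓝 x] fun y => g (‖y‖ ^ 2) * c v + 2 * g' (‖y‖ ^ 2) * ⟪y, v⟫ * c y := by
    filter_upwards [hg] with y hy using fderiv_comp_normSq_mul_apply c hy v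
  have h : HasFDerivAt (fun y => g (‖y‖ ^ 2) * c v + 2 * g' (‖y‖ ^ 2) * ⟪y, v⟫ * c y) _ x :=
    ((hg.self_of_nhds.comp_hasFDerivAt x hnormSq).mul_const (c v)).add
      ((((hg'.comp_hasFDerivAt x hnormSq).const_mul 2).mul hinner).mul c.hasFDerivAt)
  rw [hfirst.fderiv_eq, h.fderiv]
  simp only [add_apply, smul_apply, innerSL_apply_apply,
    smul_eq_mul, nsmul_eq_mul, real_inner_self_eq_norm_sq, Function.comp_apply, Pi.mul_apply]
  push_cast
  rw [real_inner_comm v x]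
  ring

theorem sum_fderiv_fderiv_comp_normSq_mul {ι : Type*} [Fintype ι] (b : OrthonormalBasis ι ℝ E)
    {x : E} (hg : ∀ᶠ y in 𝓝 x, HasDerivAt g (g' (‖y‖ ^ 2)) (‖y‖ ^ 2))
    (hg' : HasDerivAt g' g'' (‖x‖ ^ 2)) :
    ∑ j, fderiv ℝ (fun y => fderiv ℝ (fun z => g (‖z‖ ^ 2) * c z) y (b j)) x (b j)
      = (4 * ‖x‖ ^ 2 * g'' + 2 * (Fintype.card ι + 2) * g' (‖x‖ ^ 2)) * c x := by
  have hlin : ∑ j, ⟪x, b j⟫ * c (b j) = c x := by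
    conv_rhs => rw [← b.sum_repr' x]
    simp [map_sum, real_inner_comm]
  simp only [fderiv_fderiv_comp_normSq_mul_apply c hg hg', b.orthonormal.1 _, one_pow, one_mul]
  simp only [Finset.sum_add_distrib, ← Finset.sum_mul, ← Finset.mul_sum, b.sum_sq_inner_left,
    Finset.sum_const, Finset.card_univ, nsmul_eq_mul, mul_assoc (2 : ℝ), hlin]
  ring

end RadialTimesLinear

def lambOseenProfile (t r : ℝ) : ℝ := (1 - exp (-r / (4 * t))) / (2 * π * r)

def lambOseenProfileDeriv (t r : ℝ) : ℝ :=
  (r / (4 * t) * exp (-r / (4 * t)) - (1 - exp (-r / (4 * t)))) / (2 * π * r ^ 2)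

def lambOseenProfileDeriv2 (t r : ℝ) : ℝ :=
  (2 - 2 * exp (-r / (4 * t)) - ((r / (4 * t)) ^ 2 + 2 * (r / (4 * t))) * exp (-r / (4 * t)))
    / (2 * π * r ^ 3)

section Profile

variable {t r : ℝ}

theorem hasDerivAt_lambOseenProfile (ht : t ≠ 0) (hr : r ≠ 0) :
    HasDerivAt (lambOseenProfile t) (lambOseenProfileDeriv t r) r := by
  have hexp : HasDerivAt (fun r => exp (-r / (4 * t))) (exp (-r / (4 * t)) * (-1 / (4 * t))) r :=
    ((hasDerivAt_id r).neg.div_const (4 * t)).exp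
  have hden : HasDerivAt (fun r => 2 * π * r) (2 * π) r := by
    simpa using (hasDerivAt_id r).const_mul (2 * π)
  refine (((hasDerivAt_const r 1).sub hexp).div hden (by positivity)).congr_deriv ?_
  rw [lambOseenProfileDeriv, Pi.sub_apply]
  field_simp
  ring

theorem hasDerivAt_lambOseenProfileDeriv (ht : t ≠ 0) (hr : r ≠ 0) :
    HasDerivAt (lambOseenProfileDeriv t) (lambOseenProfileDeriv2 t r) r := by
  have hexp : HasDerivAt (fun r => exp (-r / (4 * t))) (exp (-r / (4 * t)) * (-1 / (4 * t))) r :=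
    ((hasDerivAt_id r).neg.div_const (4 * t)).exp
  have hscaled : HasDerivAt (fun r => r / (4 * t)) (1 / (4 * t)) r :=
    (hasDerivAt_id r).div_const (4 * t)
  have hden : HasDerivAt (fun r => 2 * π * r ^ 2) (2 * π * (2 * r)) r := by
    simpa using (hasDerivAt_pow 2 r).const_mul (2 * π)
  refine (((hscaled.mul hexp).sub ((hasDerivAt_const r 1).sub hexp)).div hden
    (by positivity)).congr_deriv ?_
  rw [lambOseenProfileDeriv2, Pi.sub_apply, Pi.sub_apply, Pi.mul_apply]
  field_simp
  ring

theorem hasDerivAt_lambOseenProfile_time (ht : t ≠ 0) (hr : r ≠ 0) :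
    HasDerivAt (fun s => lambOseenProfile s r)
      (4 * r * lambOseenProfileDeriv2 t r + 8 * lambOseenProfileDeriv t r) t := by
  have hexp :
      HasDerivAt (fun s => exp (-r / (4 * s))) (exp (-r / (4 * t)) * (r / (4 * t ^ 2))) t := by
    refine ((hasDerivAt_const t (-r)).div ((hasDerivAt_id' t).const_mul 4) (by positivity)).exp
      |>.congr_deriv ?_
    rw [Pi.div_apply]
    field_simp
    ring
  refine (((hasDerivAt_const t 1).sub hexp).div_const (2 * π * r)).congr_deriv ?_
  rw [lambOseenProfileDeriv, lambOseenProfileDeriv2]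
  field_simp
  ring

end Profile

def perpCLM : EuclideanSpace ℝ (Fin 2) →L[ℝ] EuclideanSpace ℝ (Fin 2) :=
  LinearMap.toContinuousLinearMap
    { toFun := perp
      map_add' := fun x y => by ext i; fin_cases i <;> simp [perp, add_comm]
      map_smul' := fun a x => by ext i; fin_cases i <;> simp [perp] }

/-- each component of the Lamb–Oseen vortex satisfies the heat equation away from
the origin: `∂ₜΘ(t,x) = ΔΘ(t,x)` for `t > 0`, `x ≠ 0`, where `Δ = ∂₁∂₁ + ∂₂∂₂` acts
componentwise in the space variable. -/
theorem lambOseen_heat_equation (t : ℝ) (ht : 0 < t) (x : EuclideanSpace ℝ (Fin 2))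
    (hx : x ≠ 0) (i : Fin 2) :
    deriv (fun s => lambOseen s x i) t
      = ∑ j : Fin 2, pd j (fun y => pd j (fun z => lambOseen t z i) y) x := by
  set c := (EuclideanSpace.proj i).comp perpCLM
  have hΘ : ∀ s z, lambOseen s z i = lambOseenProfile s (‖z‖ ^ 2) * c z := fun _ _ => rfl
  have hr : ‖x‖ ^ 2 ≠ 0 := pow_ne_zero 2 (norm_ne_zero_iff.mpr hx)
  have hg : ∀ᶠ y in 𝓝 x,
      HasDerivAt (lambOseenProfile t) (lambOseenProfileDeriv t (‖y‖ ^ 2)) (‖y‖ ^ 2) := by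
    filter_upwards [eventually_ne_nhds hx] with y hy
    exact hasDerivAt_lambOseenProfile ht.ne' (pow_ne_zero 2 (norm_ne_zero_iff.mpr hy))
  simp only [hΘ]
  rw [((hasDerivAt_lambOseenProfile_time ht.ne' hr).mul_const (c x)).deriv]
  have hlap := sum_fderiv_fderiv_comp_normSq_mul c (EuclideanSpace.basisFun (Fin 2) ℝ) hg
    (hasDerivAt_lambOseenProfileDeriv ht.ne' hr)
  simp only [EuclideanSpace.basisFun_apply, Fintype.card_fin] at hlap
  simp only [pd, hlap]
  ring

end
end

section
/- The Lamb–Oseen vortex is a solution of the incompressible Navier–Stokes equations in ℝ² away from the origin: there exists a function p : (0,∞) × (ℝ² ∖ {0}) → ℝ, differentiable in the space variable, such that for every t > 0 and every x ≠ 0 one has ∂ₜΘ(t,x) − ΔΘ(t,x) + ((Θ(t)·∇)Θ(t))(x) + ∇ₓp(t,x) = 0 and div Θ(t,·)(x) = 0. -/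
/-!
The Lamb–Oseen vortex is a swirl `Θ(t, x) = φ(t, |x|²) x⊥`. For any swirl `u = h(|x|²) x⊥` one has
`div u = 0`, the convective term is the centripetal acceleration `-h(|x|²)² x`, which is the
gradient of `P(|x|²)` for `P' = h² / 2`, and `Δu = (4 s h'' + 8 h') x⊥` at `s = |x|²`. So the
Navier–Stokes equations reduce to the one-dimensional equation `∂ₜφ = 4 s ∂ₛ²φ + 8 ∂ₛφ`, which the
profile `φ(t, s) = (1 - e^{-s/4t}) / (2π s)` satisfies by direct computation.
-/

open Real MeasureTheory Filter
open scoped Topology ENNReal NNReal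

noncomputable section

/-- The `i`-th component of the convective term `(u·∇)u`, namely `u₁ ∂₁uᵢ + u₂ ∂₂uᵢ`. -/
def convTerm (u : EuclideanSpace ℝ (Fin 2) → EuclideanSpace ℝ (Fin 2))
    (x : EuclideanSpace ℝ (Fin 2)) (i : Fin 2) : ℝ :=
  u x 0 * pd 0 (fun y => u y i) x + u x 1 * pd 1 (fun y => u y i) x

local notation "ℝ²" => EuclideanSpace ℝ (Fin 2)

theorem HasDerivAt.comp_norm_sq {F : Type*} [NormedAddCommGroup F] [InnerProductSpace ℝ F]
    {h : ℝ → ℝ} {h' : ℝ} {x : F} (hh : HasDerivAt h h' (‖x‖ ^ 2)) :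
    HasFDerivAt (fun y => h (‖y‖ ^ 2)) ((2 * h') • innerSL ℝ x) x := by
  refine (hh.comp_hasFDerivAt x (hasStrictFDerivAt_norm_sq x).hasFDerivAt).congr_fderiv ?_
  ext v
  simp only [smul_apply, coe_innerSL_apply, nsmul_eq_mul, smul_eq_mul]
  ring

theorem HasFDerivAt.pd_eq {f : ℝ² → ℝ} {f' : ℝ² →L[ℝ] ℝ} {x : ℝ²} (hf : HasFDerivAt f f' x)
    (j : Fin 2) : pd j f x = f' (EuclideanSpace.single j 1) := by
  rw [pd, hf.fderiv]

theorem innerSL_apply_single (x : ℝ²) (j : Fin 2) :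
    innerSL ℝ x (EuclideanSpace.single j 1) = x j := by
  simp [EuclideanSpace.inner_single_right]

theorem EuclideanSpace.norm_sq_eq_fin_two (x : ℝ²) : ‖x‖ ^ 2 = x 0 ^ 2 + x 1 ^ 2 := by
  simp [EuclideanSpace.real_norm_sq_eq, Fin.sum_univ_two]

theorem ContinuousLinearMap.apply_eq_fin_two (L : ℝ² →L[ℝ] ℝ) (x : ℝ²) :
    L x = x 0 * L (EuclideanSpace.single 0 1) + x 1 * L (EuclideanSpace.single 1 1) := by
  conv_lhs => rw [show x = x 0 • EuclideanSpace.single 0 1 + x 1 • EuclideanSpace.single 1 1 by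
    ext i; fin_cases i <;> simp]
  simp

section RadialTimesLinear

variable {x : ℝ²}

theorem hasFDerivAt_radial_mul {h : ℝ → ℝ} {h' : ℝ} (hh : HasDerivAt h h' (‖x‖ ^ 2))
    (L : ℝ² →L[ℝ] ℝ) :
    HasFDerivAt (fun y => h (‖y‖ ^ 2) * L y)
      (h (‖x‖ ^ 2) • L + L x • (2 * h') • innerSL ℝ x) x :=
  hh.comp_norm_sq.mul L.hasFDerivAt

theorem pd_radial_mul {h : ℝ → ℝ} {h' : ℝ} (hh : HasDerivAt h h' (‖x‖ ^ 2))
    (L : ℝ² →L[ℝ] ℝ) (j : Fin 2) :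
    pd j (fun y => h (‖y‖ ^ 2) * L y) x
      = 2 * h' * x j * L x + h (‖x‖ ^ 2) * L (EuclideanSpace.single j 1) := by
  rw [(hasFDerivAt_radial_mul hh L).pd_eq]
  simp only [add_apply, smul_apply, smul_eq_mul, innerSL_apply_single]
  ring

theorem sum_pd_pd_radial_mul {h h' : ℝ → ℝ} {h'' : ℝ}
    (hh : ∀ᶠ σ in 𝓝 (‖x‖ ^ 2), HasDerivAt h (h' σ) σ) (hh' : HasDerivAt h' h'' (‖x‖ ^ 2))
    (L : ℝ² →L[ℝ] ℝ) :
    ∑ j : Fin 2, pd j (fun y => pd j (fun z => h (‖z‖ ^ 2) * L z) y) x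
      = (4 * ‖x‖ ^ 2 * h'' + 8 * h' (‖x‖ ^ 2)) * L x := by
  have hnear : ∀ᶠ y in 𝓝 x, HasDerivAt h (h' (‖y‖ ^ 2)) (‖y‖ ^ 2) :=
    ((continuous_norm.pow 2).tendsto x).eventually hh
  have hpd : ∀ j : Fin 2, pd j (fun y => pd j (fun z => h (‖z‖ ^ 2) * L z) y) x
      = 4 * h'' * x j ^ 2 * L x
        + 2 * h' (‖x‖ ^ 2) * (L x + 2 * x j * L (EuclideanSpace.single j 1)) := by
    intro j
    have hfirst : (fun y => pd j (fun z => h (‖z‖ ^ 2) * L z) y) =ᶠ[𝓝 x]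
        fun y => 2 * (h' (‖y‖ ^ 2) * L y * EuclideanSpace.proj j y)
          + h (‖y‖ ^ 2) * L (EuclideanSpace.single j 1) := by
      filter_upwards [hnear] with y hy
      rw [pd_radial_mul hy, PiLp.proj_apply]; ring
    have hsecond := (((hasFDerivAt_radial_mul hh' L).fun_mul
      (EuclideanSpace.proj j).hasFDerivAt).const_mul 2).fun_add
      (hnear.self_of_nhds.comp_norm_sq.mul_const (L (EuclideanSpace.single j 1)))
    rw [pd, hfirst.fderiv_eq, hsecond.fderiv]
    simp only [PiLp.proj_apply, add_apply, smul_apply, PiLp.single_eq_same, smul_eq_mul,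
      innerSL_apply_single]
    ring
  simp only [Fin.sum_univ_two, hpd]
  rw [EuclideanSpace.norm_sq_eq_fin_two, L.apply_eq_fin_two x]
  ring

end RadialTimesLinear

@[simp] theorem perp_apply_zero (x : ℝ²) : perp x 0 = x 1 := by simp [perp]

@[simp] theorem perp_apply_one (x : ℝ²) : perp x 1 = -x 0 := by simp [perp]

def perpL : ℝ² →L[ℝ] ℝ² := LinearMap.toContinuousLinearMap
  { toFun := perp
    map_add' := fun x y => by ext i; fin_cases i <;> simp [add_comm]
    map_smul' := fun c x => by ext i; fin_cases i <;> simp }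

def swirl (h : ℝ → ℝ) (y : ℝ²) : ℝ² := h (‖y‖ ^ 2) • perp y

section Swirl

variable {x : ℝ²}

theorem swirl_apply (h : ℝ → ℝ) (y : ℝ²) (i : Fin 2) :
    swirl h y i = h (‖y‖ ^ 2) * perp y i := rfl

theorem pd_swirl {h : ℝ → ℝ} {h' : ℝ} (hh : HasDerivAt h h' (‖x‖ ^ 2)) (i j : Fin 2) :
    pd j (fun y => swirl h y i) x
      = 2 * h' * x j * perp x i + h (‖x‖ ^ 2) * perp (EuclideanSpace.single j 1) i :=
  pd_radial_mul hh (EuclideanSpace.proj i ∘L perpL) j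

theorem div_swirl {h : ℝ → ℝ} {h' : ℝ} (hh : HasDerivAt h h' (‖x‖ ^ 2)) :
    pd 0 (fun y => swirl h y 0) x + pd 1 (fun y => swirl h y 1) x = 0 := by
  simp only [pd_swirl hh, perp_apply_zero, perp_apply_one, PiLp.single_eq_of_ne, ne_eq,
    one_ne_zero, zero_ne_one, not_false_eq_true]
  ring

theorem convTerm_swirl {h : ℝ → ℝ} {h' : ℝ} (hh : HasDerivAt h h' (‖x‖ ^ 2)) (i : Fin 2) :
    convTerm (swirl h) x i = -h (‖x‖ ^ 2) ^ 2 * x i := by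
  rw [convTerm, pd_swirl hh, pd_swirl hh, swirl_apply, swirl_apply]
  fin_cases i <;>
    simp only [Fin.zero_eta, Fin.mk_one, perp_apply_zero, perp_apply_one, PiLp.single_eq_same,
      PiLp.single_eq_of_ne, ne_eq, one_ne_zero, zero_ne_one, not_false_eq_true] <;>
    ring

theorem laplacian_swirl {h h' : ℝ → ℝ} {h'' : ℝ}
    (hh : ∀ᶠ σ in 𝓝 (‖x‖ ^ 2), HasDerivAt h (h' σ) σ) (hh' : HasDerivAt h' h'' (‖x‖ ^ 2))
    (i : Fin 2) :
    ∑ j : Fin 2, pd j (fun y => pd j (fun z => swirl h z i) y) x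
      = (4 * ‖x‖ ^ 2 * h'' + 8 * h' (‖x‖ ^ 2)) * perp x i :=
  sum_pd_pd_radial_mul hh hh' (EuclideanSpace.proj i ∘L perpL)

/-- The base point `1` is arbitrary but must lie in `(0, ∞)`, where `h` is assumed continuous. -/
def swirlPressure (h : ℝ → ℝ) (y : ℝ²) : ℝ := ∫ σ in (1 : ℝ)..‖y‖ ^ 2, h σ ^ 2 / 2

theorem hasFDerivAt_swirlPressure {h : ℝ → ℝ} (hc : ContinuousOn h (Set.Ioi 0)) (hx : x ≠ 0) :
    HasFDerivAt (swirlPressure h) (h (‖x‖ ^ 2) ^ 2 • innerSL ℝ x) x := by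
  have hc2 : ContinuousOn (fun σ => h σ ^ 2 / 2) (Set.Ioi 0) := (hc.pow 2).div_const 2
  have hs : 0 < ‖x‖ ^ 2 := by positivity
  have hsub : Set.uIcc 1 (‖x‖ ^ 2) ⊆ Set.Ioi 0 := fun σ hσ =>
    lt_of_lt_of_le (lt_min one_pos hs) hσ.1
  have hP : HasDerivAt (fun s => ∫ σ in (1 : ℝ)..s, h σ ^ 2 / 2) (h (‖x‖ ^ 2) ^ 2 / 2) (‖x‖ ^ 2) :=
    intervalIntegral.integral_hasDerivAt_right (hc2.mono hsub).intervalIntegrable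
      (hc2.stronglyMeasurableAtFilter isOpen_Ioi _ hs) (hc2.continuousAt (Ioi_mem_nhds hs))
  refine hP.comp_norm_sq.congr_fderiv ?_
  rw [← mul_div_assoc, mul_div_cancel_left₀ _ two_ne_zero]

theorem convTerm_swirl_add_pd_swirlPressure {h : ℝ → ℝ} {h' : ℝ}
    (hh : HasDerivAt h h' (‖x‖ ^ 2)) (hc : ContinuousOn h (Set.Ioi 0)) (hx : x ≠ 0) (i : Fin 2) :
    convTerm (swirl h) x i + pd i (swirlPressure h) x = 0 := by
  rw [convTerm_swirl hh, (hasFDerivAt_swirlPressure hc hx).pd_eq]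
  simp [innerSL_apply_single]

end Swirl

def vortexProfile (t s : ℝ) : ℝ := (1 - exp (-s / (4 * t))) / (2 * π * s)

def vortexProfileDeriv (t s : ℝ) : ℝ :=
  (exp (-s / (4 * t)) * s / (4 * t) - (1 - exp (-s / (4 * t)))) / (2 * π * s ^ 2)

def vortexProfileDeriv2 (t s : ℝ) : ℝ :=
  (-exp (-s / (4 * t)) * s ^ 2 / (16 * t ^ 2)
    - 2 * (exp (-s / (4 * t)) * s / (4 * t) - (1 - exp (-s / (4 * t))))) / (2 * π * s ^ 3)

theorem lambOseen_eq_swirl (t : ℝ) : lambOseen t = swirl (vortexProfile t) := rfl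

theorem hasDerivAt_exp_neg_div (t s : ℝ) :
    HasDerivAt (fun s => exp (-s / (4 * t))) (exp (-s / (4 * t)) * (-1 / (4 * t))) s :=
  ((hasDerivAt_neg s).div_const (4 * t)).exp

theorem hasDerivAt_vortexProfile {t s : ℝ} (hs : s ≠ 0) :
    HasDerivAt (vortexProfile t) (vortexProfileDeriv t s) s := by
  have h := ((hasDerivAt_exp_neg_div t s).const_sub 1).div
    ((hasDerivAt_id' s).const_mul (2 * π)) (by positivity)
  refine h.congr_deriv ?_
  rw [vortexProfileDeriv]
  field_simp

theorem hasDerivAt_vortexProfileDeriv {t s : ℝ} (ht : t ≠ 0) (hs : s ≠ 0) :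
    HasDerivAt (vortexProfileDeriv t) (vortexProfileDeriv2 t s) s := by
  have hE := hasDerivAt_exp_neg_div t s
  have h := (((hE.mul (hasDerivAt_id' s)).div_const (4 * t)).sub (hE.const_sub 1)).div
    ((hasDerivAt_pow 2 s).const_mul (2 * π)) (by positivity)
  refine h.congr_deriv ?_
  simp only [vortexProfileDeriv2, Pi.sub_apply, Pi.mul_apply]
  field_simp
  ring

/-- With `laplacian_swirl`, this is the heat equation `∂ₜΘ = ΔΘ` for the Lamb–Oseen vortex. -/
theorem hasDerivAt_vortexProfile_time {t s : ℝ} (ht : t ≠ 0) (hs : s ≠ 0) :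
    HasDerivAt (fun τ => vortexProfile τ s)
      (4 * s * vortexProfileDeriv2 t s + 8 * vortexProfileDeriv t s) t := by
  have harg : HasDerivAt (fun τ => -s / (4 * τ)) (s / (4 * t ^ 2)) t := by
    have h := (hasDerivAt_inv ht).const_mul (-s / 4)
    rw [show (fun τ => -s / (4 * τ)) = fun τ => -s / 4 * τ⁻¹ by funext τ; ring]
    exact h.congr_deriv (by ring)
  have h := (harg.exp.const_sub 1).div_const (2 * π * s)
  refine h.congr_deriv ?_
  rw [vortexProfileDeriv2, vortexProfileDeriv]
  field_simp
  ring

/-- the Lamb–Oseen vortex solves the incompressible Navier–Stokes equations in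
`ℝ²` away from the origin: there is a pressure `p(t,·)`, differentiable in space on
`ℝ² \ {0}`, with `∂ₜΘ - ΔΘ + (Θ·∇)Θ + ∇p = 0` and `div Θ = 0` for all `t > 0`, `x ≠ 0`. -/
theorem lambOseen_solves_navier_stokes :
    ∃ p : ℝ → EuclideanSpace ℝ (Fin 2) → ℝ,
      ∀ t : ℝ, 0 < t → ∀ x : EuclideanSpace ℝ (Fin 2), x ≠ 0 →
        DifferentiableAt ℝ (p t) x ∧
        (∀ i : Fin 2,
          deriv (fun s => lambOseen s x i) t
            - (∑ j : Fin 2, pd j (fun y => pd j (fun z => lambOseen t z i) y) x)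
            + convTerm (lambOseen t) x i
            + fderiv ℝ (p t) x (EuclideanSpace.single i 1) = 0) ∧
        pd 0 (fun y => lambOseen t y 0) x + pd 1 (fun y => lambOseen t y 1) x = 0 := by
  refine ⟨fun t => swirlPressure (vortexProfile t), fun t ht x hx => ?_⟩
  have hs : ‖x‖ ^ 2 ≠ 0 := by positivity
  have hφ := hasDerivAt_vortexProfile (t := t) hs
  have hφ_cont : ContinuousOn (vortexProfile t) (Set.Ioi 0) := fun σ hσ =>
    (hasDerivAt_vortexProfile (ne_of_gt hσ)).continuousAt.continuousWithinAt
  have hφ_near : ∀ᶠ σ in 𝓝 (‖x‖ ^ 2), HasDerivAt (vortexProfile t) (vortexProfileDeriv t σ) σ :=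
    (eventually_ne_nhds hs).mono fun σ hσ => hasDerivAt_vortexProfile hσ
  have hΘ_time : ∀ i, HasDerivAt (fun s => lambOseen s x i)
      ((4 * ‖x‖ ^ 2 * vortexProfileDeriv2 t (‖x‖ ^ 2) + 8 * vortexProfileDeriv t (‖x‖ ^ 2))
        * perp x i) t := fun i =>
    (hasDerivAt_vortexProfile_time ht.ne' hs).mul_const (perp x i)
  rw [lambOseen_eq_swirl]
  refine ⟨(hasFDerivAt_swirlPressure hφ_cont hx).differentiableAt, fun i => ?_, div_swirl hφ⟩
  rw [(hΘ_time i).deriv, laplacian_swirl hφ_near (hasDerivAt_vortexProfileDeriv ht.ne' hs),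
    add_assoc, ← pd, convTerm_swirl_add_pd_swirlPressure hφ hφ_cont hx]
  ring

end
end

section
/- For every p with 2 < p ≤ ∞ and every t > 0, the Lamb–Oseen vortex Θ(t,·) belongs to Lᵖ(ℝ²; ℝ²), and its Lᵖ norm decays self-similarly: t^{1/2 − 1/p}·‖Θ(t,·)‖_{Lᵖ(ℝ²)} = ‖Θ(1,·)‖_{Lᵖ(ℝ²)} (with the convention 1/∞ = 0). -/
open Real MeasureTheory Filter
open scoped Topology ENNReal NNReal

noncomputable section

/-!
Two facts. First, `Θ` is self-similar: `Θ(t, x) = t^{-1/2} Θ(1, x/√t)`, and the dilation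
`x ↦ x/√t` multiplies Lebesgue measure on `ℝ²` by `t`, so `‖Θ(t,·)‖_p = t^{1/p - 1/2} ‖Θ(1,·)‖_p`.
Second, `Θ(1,·)` is bounded and decays like `1/(2π|x|)`: from `1 - e^{-s²/4} ≤ min(1, s²/4)` one
gets `|Θ(1,x)| ≤ π⁻¹ (1 + |x|)⁻¹`, which lies in `Lᵖ(ℝ²)` exactly when `p > 2`.
-/

lemma perp_smul (c : ℝ) (x : EuclideanSpace ℝ (Fin 2)) : perp (c • x) = c • perp x := by
  ext i
  fin_cases i <;> simp [perp, mul_neg]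

lemma norm_perp (x : EuclideanSpace ℝ (Fin 2)) : ‖perp x‖ = ‖x‖ := by
  simp [perp, EuclideanSpace.norm_eq, Fin.sum_univ_two, add_comm]

@[fun_prop]
lemma continuous_perp : Continuous perp := by
  show Continuous fun x : EuclideanSpace ℝ (Fin 2) => WithLp.toLp 2 ![x 1, -(x 0)]
  fun_prop

lemma measurable_lambOseen (t : ℝ) : Measurable (lambOseen t) := by
  unfold lambOseen
  fun_prop

lemma norm_lambOseen {t : ℝ} (ht : 0 ≤ t) (x : EuclideanSpace ℝ (Fin 2)) :
    ‖lambOseen t x‖ = (1 - exp (-‖x‖ ^ 2 / (4 * t))) / (2 * π * ‖x‖) := by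
  have hexp : exp (-‖x‖ ^ 2 / (4 * t)) ≤ 1 := exp_le_one_iff.2 <| by
    have := norm_nonneg x
    exact div_nonpos_of_nonpos_of_nonneg (by nlinarith) (by positivity)
  rw [lambOseen, norm_smul, norm_perp, norm_of_nonneg (by have := pi_pos; positivity)]
  rcases eq_or_ne ‖x‖ 0 with hx | hx
  · simp [hx]
  · field_simp

lemma norm_lambOseen_one_le (x : EuclideanSpace ℝ (Fin 2)) :
    ‖lambOseen 1 x‖ ≤ π⁻¹ * (1 + ‖x‖)⁻¹ := by
  rw [norm_lambOseen zero_le_one, mul_one]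
  rcases (norm_nonneg x).eq_or_lt with hs | hs
  · simp [← hs, pi_pos.le]
  set s := ‖x‖
  have h_le_one : 1 - exp (-s ^ 2 / 4) ≤ 1 := by linarith [exp_pos (-s ^ 2 / 4)]
  have h_le_sq : 1 - exp (-s ^ 2 / 4) ≤ s ^ 2 / 4 := by
    linarith [add_one_le_exp (-s ^ 2 / 4)]
  rw [← mul_inv, div_le_iff₀ (by positivity), inv_mul_eq_div, le_div_iff₀ (by positivity)]
  have key : (1 - exp (-s ^ 2 / 4)) * (1 + s) ≤ 2 * s := by
    rcases le_total s 2 with h | h <;> nlinarith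
  nlinarith [pi_pos]

lemma lambOseen_eq_smul_lambOseen_one {t : ℝ} (ht : 0 < t) :
    lambOseen t = (√t)⁻¹ • fun x => lambOseen 1 ((√t)⁻¹ • x) := by
  funext x
  have hsq : √t ^ 2 = t := sq_sqrt ht.le
  have hsqrt : 0 < √t := sqrt_pos.2 ht
  rw [Pi.smul_apply, lambOseen, lambOseen, perp_smul, norm_smul, smul_smul, smul_smul, norm_inv,
    norm_of_nonneg hsqrt.le, mul_pow, inv_pow, hsq]
  congr 1
  rcases eq_or_ne ‖x‖ 0 with hx | hx
  · simp [hx]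
  · field_simp
    rw [hsq]
    ring_nf

section AddHaar

variable {E F : Type*} [NormedAddCommGroup E] [NormedSpace ℝ E] [FiniteDimensional ℝ E]
  [MeasurableSpace E] [BorelSpace E] (μ : Measure E) [μ.IsAddHaarMeasure] [NormedAddCommGroup F]

lemma eLpNorm_comp_smul {f : E → F} (hf : AEStronglyMeasurable f μ) (p : ℝ≥0∞) {r : ℝ}
    (hr : r ≠ 0) :
    eLpNorm (fun x => f (r • x)) p μ
      = ENNReal.ofReal |(r ^ Module.finrank ℝ E)⁻¹| ^ (1 / p).toReal * eLpNorm f p μ := by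
  have hc : ENNReal.ofReal |(r ^ Module.finrank ℝ E)⁻¹| ≠ 0 := by simp [hr]
  have hmap := Measure.map_addHaar_smul μ hr
  change eLpNorm (f ∘ fun x => r • x) p μ = _
  rw [← eLpNorm_map_measure (hmap ▸ hf.smul_measure _) (measurable_const_smul r).aemeasurable,
    hmap, eLpNorm_smul_measure_of_ne_zero hc, smul_eq_mul]

lemma memLp_inv_one_add_norm {p : ℝ≥0∞} (hp : Module.finrank ℝ E < p) :
    MemLp (fun x : E => (1 + ‖x‖)⁻¹) p μ := by
  have hmeas : AEStronglyMeasurable (fun x : E => (1 + ‖x‖)⁻¹) μ := by fun_prop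
  rcases eq_or_ne p ∞ with rfl | hp_top
  · refine memLp_top_of_bound hmeas 1 (.of_forall fun x => ?_)
    rw [norm_inv, norm_of_nonneg (by positivity)]
    exact inv_le_one_of_one_le₀ (by simp)
  have hp_zero : p ≠ 0 := (pos_of_gt hp).ne'
  rw [← integrable_norm_rpow_iff hmeas hp_zero hp_top]
  have hp_real : (Module.finrank ℝ E : ℝ) < p.toReal := by
    simpa using (ENNReal.toReal_lt_toReal (by simp) hp_top).2 hp
  refine (integrable_one_add_norm hp_real).congr (.of_forall fun x => ?_)
  dsimp only
  rw [norm_inv, norm_of_nonneg (by positivity), inv_rpow (by positivity), rpow_neg (by positivity)]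

end AddHaar

lemma memLp_lambOseen_one {p : ℝ≥0∞} (hp : 2 < p) :
    MemLp (lambOseen 1) p (volume : Measure (EuclideanSpace ℝ (Fin 2))) := by
  refine (memLp_inv_one_add_norm volume (by simpa using hp)).of_le_mul
    (measurable_lambOseen 1).aestronglyMeasurable (c := π⁻¹) (.of_forall fun x => ?_)
  rw [norm_inv, norm_of_nonneg (by positivity)]
  exact norm_lambOseen_one_le x

lemma eLpNorm_lambOseen (p : ℝ≥0∞) {t : ℝ} (ht : 0 < t) :
    eLpNorm (lambOseen t) p volume
      = ENNReal.ofReal (t ^ (1 / p.toReal - 1 / 2)) * eLpNorm (lambOseen 1) p volume := by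
  have hsqrt : 0 < √t := sqrt_pos.2 ht
  have hdil : |((√t)⁻¹ ^ Module.finrank ℝ (EuclideanSpace ℝ (Fin 2)))⁻¹| = t := by
    rw [finrank_euclideanSpace_fin, inv_pow, sq_sqrt ht.le, inv_inv, abs_of_pos ht]
  rw [lambOseen_eq_smul_lambOseen_one ht, eLpNorm_const_smul,
    eLpNorm_comp_smul volume (measurable_lambOseen 1).aestronglyMeasurable p
      (inv_ne_zero hsqrt.ne'), hdil, ← mul_assoc]
  congr 1
  rw [enorm_inv hsqrt.ne', Real.enorm_eq_ofReal hsqrt.le, ENNReal.ofReal_rpow_of_pos ht,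
    ← ENNReal.ofReal_inv_of_pos hsqrt, ← ENNReal.ofReal_mul (by positivity), one_div p,
    ENNReal.toReal_inv, sqrt_eq_rpow, ← rpow_neg ht.le, ← rpow_add ht]
  ring_nf

/-- for `2 < p ≤ ∞` and `t > 0` the Lamb–Oseen vortex `Θ(t,·)` belongs to
`Lᵖ(ℝ²;ℝ²)` and `t^{1/2-1/p} ‖Θ(t,·)‖_{Lᵖ} = ‖Θ(1,·)‖_{Lᵖ}` (with `1/∞ = 0`). -/
theorem lambOseen_Lp_decay (p : ℝ≥0∞) (hp : 2 < p) (t : ℝ) (ht : 0 < t) :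
    MemLp (lambOseen t) p (volume : Measure (EuclideanSpace ℝ (Fin 2))) ∧
    ENNReal.ofReal (t ^ ((1 : ℝ) / 2 - 1 / p.toReal))
        * eLpNorm (lambOseen t) p (volume : Measure (EuclideanSpace ℝ (Fin 2)))
      = eLpNorm (lambOseen 1) p (volume : Measure (EuclideanSpace ℝ (Fin 2))) := by
  have hmem := memLp_lambOseen_one hp
  refine ⟨⟨(measurable_lambOseen t).aestronglyMeasurable, ?_⟩, ?_⟩
  · rw [eLpNorm_lambOseen p ht]
    exact ENNReal.mul_lt_top ENNReal.ofReal_lt_top hmem.eLpNorm_lt_top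
  · rw [eLpNorm_lambOseen p ht, ← mul_assoc, ← ENNReal.ofReal_mul (by positivity),
      ← rpow_add ht, sub_add_sub_cancel', sub_self, rpow_zero, ENNReal.ofReal_one, one_mul]
end
end
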